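/- Let w be a word over {a^{±1}, t^{±1}} and define α recursively by α(ε) = 0, α(w·t^{±1}) = α(w), α(w·a) = α(w) + (2/3)^{β(w)}, α(w·a⁻¹) = α(w) − (2/3)^{β(w)}, where β(w) = |w|_t − |w|_{t⁻¹}. Then any two words representing the same element of BS(2,3) = ⟨a, t | t⁻¹ a² t = a³⟩ have equal α-values; in particular the defining relator t⁻¹a²t a⁻³ satisfies α(w · t⁻¹a²ta⁻³) = α(w) for all words w. -/

import Mathlib

/-- One step of the simultaneous recursion computing `(α(w), β(w))`, reading one
letter of a word over `{a^{±1}, t^{±1}}` (letter `(0, true)` is `a`, `(0, false)` is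
`a⁻¹`, `(1, true)` is `t`, `(1, false)` is `t⁻¹`):
`α(w·t^{±1}) = α(w)`, `α(w·a^{±1}) = α(w) ± (2/3)^{β(w)}`,
`β(w·a^{±1}) = β(w)`, `β(w·t^{±1}) = β(w) ± 1`. -/
noncomputable def alphaBetaStep (s : ℝ × ℤ) (ℓ : Fin 2 × Bool) : ℝ × ℤ :=
  if ℓ.1 = 0 then
    (if ℓ.2 then (s.1 + (2/3 : ℝ) ^ s.2, s.2) else (s.1 - (2/3 : ℝ) ^ s.2, s.2))
  else
    (if ℓ.2 then (s.1, s.2 + 1) else (s.1, s.2 - 1))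

/-- `α(w)` for a word `w` over `{a^{±1}, t^{±1}}`, with `α(ε) = 0` and `β(ε) = 0`. -/
noncomputable def alphaWord (w : List (Fin 2 × Bool)) : ℝ :=
  (w.foldl alphaBetaStep (0, 0)).1

/-- Relator of `BS(2,3) = ⟨a, t | t⁻¹ a² t = a³⟩` (generator `0` is `a`, `1` is `t`). -/
def bs23Rels : Set (FreeGroup (Fin 2)) :=
  {(FreeGroup.of 1)⁻¹ * FreeGroup.of 0 ^ 2 * FreeGroup.of 1 * (FreeGroup.of 0 ^ 3)⁻¹}

/-- The defining relator `t⁻¹ a² t a⁻³` as a word. -/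
def relatorWord : List (Fin 2 × Bool) :=
  [(1, false), (0, true), (0, true), (1, true), (0, false), (0, false), (0, false)]

/-!
Reading a word letter by letter, each letter acts on the states `(α, β) ∈ ℝ × ℤ` by a bijection
whose inverse is the action of the inverse letter, so the fold is a right action of the free
group. The relator `t⁻¹ a² t a⁻³` acts trivially: starting from `β = n`, the two letters `a` add
`2 (2/3)^(n-1) = 3 (2/3)^n` to `α` and the three letters `a⁻¹` remove `3 (2/3)^n`. Hence the
action factors through `BS(2,3)`.
-/

section FoldlFreeGroup

variable {α S : Type*}

def letterPerm (f : S → α × Bool → S) (hf : ∀ s ℓ, f (f s ℓ) (ℓ.1, !ℓ.2) = s)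
    (ℓ : α × Bool) : Equiv.Perm S where
  toFun s := f s ℓ
  invFun s := f s (ℓ.1, !ℓ.2)
  left_inv s := hf s ℓ
  right_inv s := by simpa using hf s (ℓ.1, !ℓ.2)

def foldlHom (f : S → α × Bool → S) (hf : ∀ s ℓ, f (f s ℓ) (ℓ.1, !ℓ.2) = s) :
    FreeGroup α →* (Equiv.Perm S)ᵐᵒᵖ :=
  FreeGroup.lift fun a => MulOpposite.op (letterPerm f hf (a, true))

theorem foldl_eq_foldlHom_mk (f : S → α × Bool → S) (hf : ∀ s ℓ, f (f s ℓ) (ℓ.1, !ℓ.2) = s)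
    (w : List (α × Bool)) (s : S) : w.foldl f s = (foldlHom f hf (FreeGroup.mk w)).unop s := by
  induction w generalizing s with
  | nil => rfl
  | cons ℓ w ih =>
    obtain ⟨a, _ | _⟩ := ℓ <;>
      simp [foldlHom, FreeGroup.lift_mk, ih] <;> rfl

theorem foldl_congr_of_mk_eq (f : S → α × Bool → S) (hf : ∀ s ℓ, f (f s ℓ) (ℓ.1, !ℓ.2) = s)
    {w₁ w₂ : List (α × Bool)} (h : FreeGroup.mk w₁ = FreeGroup.mk w₂) (s : S) :
    w₁.foldl f s = w₂.foldl f s := by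
  rw [foldl_eq_foldlHom_mk f hf, foldl_eq_foldlHom_mk f hf, h]

theorem foldl_congr_of_presentedGroup_mk_eq (f : S → α × Bool → S)
    (hf : ∀ s ℓ, f (f s ℓ) (ℓ.1, !ℓ.2) = s) {rels : Set (FreeGroup α)}
    (hrels : ∀ w, FreeGroup.mk w ∈ rels → ∀ s, w.foldl f s = s) {w₁ w₂ : List (α × Bool)}
    (h : (QuotientGroup.mk (FreeGroup.mk w₁) : PresentedGroup rels) =
      QuotientGroup.mk (FreeGroup.mk w₂)) (s : S) :
    w₁.foldl f s = w₂.foldl f s := by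
  have hrels' : ∀ r ∈ rels, foldlHom f hf r = 1 := by
    rintro ⟨w⟩ hw
    exact MulOpposite.unop_injective <| Equiv.ext fun s =>
      (foldl_eq_foldlHom_mk f hf w s).symm.trans (hrels w hw s)
  have h_act := congrArg (fun g => (PresentedGroup.toGroup hrels' g).unop s) h
  exact (foldl_eq_foldlHom_mk f hf w₁ s).trans (h_act.trans (foldl_eq_foldlHom_mk f hf w₂ s).symm)

end FoldlFreeGroup

theorem alphaBetaStep_alphaBetaStep_flip (s : ℝ × ℤ) (ℓ : Fin 2 × Bool) :
    alphaBetaStep (alphaBetaStep s ℓ) (ℓ.1, !ℓ.2) = s := by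
  obtain ⟨i, _ | _⟩ := ℓ <;> by_cases hi : i = 0 <;> simp [alphaBetaStep, hi]

theorem foldl_relatorWord (s : ℝ × ℤ) : relatorWord.foldl alphaBetaStep s = s := by
  obtain ⟨x, n⟩ := s
  have h : (2/3 : ℝ) ^ (n - 1) = 3/2 * (2/3 : ℝ) ^ n := by
    rw [zpow_sub_one₀ (by norm_num)]
    ring
  simp only [relatorWord, List.foldl_cons, List.foldl_nil, alphaBetaStep]
  norm_num [h]
  ring

theorem mk_relatorWord :
    FreeGroup.mk relatorWord =
      (FreeGroup.of 1)⁻¹ * FreeGroup.of 0 ^ 2 * FreeGroup.of 1 * (FreeGroup.of 0 ^ 3)⁻¹ := by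
  decide

theorem alpha_descends_to_BS23 :
    (∀ w₁ w₂ : List (Fin 2 × Bool),
      (QuotientGroup.mk (FreeGroup.mk w₁) : PresentedGroup bs23Rels) =
        QuotientGroup.mk (FreeGroup.mk w₂) →
      alphaWord w₁ = alphaWord w₂) ∧
    (∀ w : List (Fin 2 × Bool), alphaWord (w ++ relatorWord) = alphaWord w) := by
  refine ⟨fun w₁ w₂ h => congrArg Prod.fst <|
    foldl_congr_of_presentedGroup_mk_eq _ alphaBetaStep_alphaBetaStep_flip ?_ h _, fun w => ?_⟩
  · rintro w hw s
    rw [bs23Rels, Set.mem_singleton_iff, ← mk_relatorWord] at hw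
    rw [foldl_congr_of_mk_eq _ alphaBetaStep_alphaBetaStep_flip hw, foldl_relatorWord]
  · rw [alphaWord, alphaWord, List.foldl_append, foldl_relatorWord]
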